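/- Let scalars k^{(i)}_{st} ∈ k be given for 1 ≤ i, s, t ≤ n. Then in V^{⊗(n+1)}: (1) ∑_{j=1}^{n} ∑_{s,t=1}^{n} k^{(j)}_{st} · r_{1,…,j−1,s,j+1,…,n} ⊗ x_t = r_{1 2 ⋯ n} ⊗ (∑_{s,t=1}^{n} k^{(s)}_{st} x_t), and (2) ∑_{j=1}^{n} ∑_{s,t=1}^{n} k^{(j)}_{st} · x_s ⊗ r_{1,…,j−1,t,j+1,…,n} = (∑_{s,t=1}^{n} k^{(t)}_{st} x_s) ⊗ r_{1 2 ⋯ n}. Here r_{1,…,j−1,s,j+1,…,n} denotes the element associated with the index sequence obtained from (1,2,…,n) by replacing the j-th entry by s. Consequently, if δ is the linear map V → V⊗V with δ(x_i) = ∑_{s,t} k^{(i)}_{st} x_s⊗x_t, the two vectors appearing on the right-hand sides sum to ∑_{s=1}^{n} ∑_{t=1}^{n} (k^{(s)}_{st} + k^{(s)}_{ts}) x_t, the divergence of δ. -/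

import Mathlib

open scoped TensorProduct
open PiTensorProduct

namespace OrePaper

variable (k : Type*) [Field k] (V : Type*) [AddCommGroup V] [Module k V]

/-- The canonical isomorphism `V^{⊗a} ⊗ V^{⊗b} ≃ V^{⊗(a+b)}`. -/
noncomputable abbrev mulPow (a b : ℕ) :
    ((⨂[k]^a V) ⊗[k] (⨂[k]^b V)) ≃ₗ[k] ⨂[k]^(a+b) V :=
  TensorPower.mulEquiv

variable {k V}

/-- Identification of `V` with `V^{⊗1}`. -/
noncomputable def toPow1 : V ≃ₗ[k] ⨂[k]^1 V :=
  (PiTensorProduct.subsingletonEquiv (s := fun _ : Fin 1 => V) (0 : Fin 1)).symm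

/-- `w ⊗ v ∈ V^{⊗(m+1)}` for `w ∈ V^{⊗m}`, `v ∈ V`. -/
noncomputable def append {m : ℕ} (w : ⨂[k]^m V) (v : V) : ⨂[k]^(m+1) V :=
  mulPow k V m 1 (w ⊗ₜ[k] toPow1 v)

/-- `v ⊗ w ∈ V^{⊗(m+1)}` for `v ∈ V`, `w ∈ V^{⊗m}`. -/
noncomputable def prepend {m : ℕ} (v : V) (w : ⨂[k]^m V) : ⨂[k]^(m+1) V :=
  TensorPower.cast k V (Nat.add_comm 1 m) (mulPow k V 1 m (toPow1 v ⊗ₜ[k] w))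

/-- The elements `r_{i_1 i_2 ⋯ i_m} ∈ V^{⊗m}`:
`r_{i_1 i_2} = x_{i_1} ⊗ x_{i_2} − x_{i_2} ⊗ x_{i_1}` and, recursively for `m ≥ 3`,
`r_{i_1 ⋯ i_m} = ∑_{j=1}^{m} (−1)^{m−j} r_{i_1 ⋯ î_j ⋯ i_m} ⊗ x_{i_j}`.
(For a single index we set `r_i = x_i`, which is the convention making the left-handed
expansion hold also for `m = 2`.) -/
noncomputable def rElt {n : ℕ} (x : Fin n → V) : (m : ℕ) → (Fin m → Fin n) → ⨂[k]^m V
  | 0, _ => 0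
  | 1, ι => toPow1 (x (ι 0))
  | 2, ι => append (toPow1 (x (ι 0))) (x (ι 1)) - append (toPow1 (x (ι 1))) (x (ι 0))
  | (m+3), ι => ∑ j : Fin (m+3),
      ((-1 : k)^((m+2) - (j : ℕ))) • append (rElt x (m+2) (ι ∘ j.succAbove)) (x (ι j))

/-!
The recursion defining `r` is the Laplace expansion, along the last tensor slot, of the
antisymmetrization `∑_σ sgn σ · x_{i_σ(1)} ⊗ ⋯ ⊗ x_{i_σ(m)}`; hence `r_{i_1 ⋯ i_m}` is that
antisymmetrization and vanishes as soon as two indices coincide. In the sums over `j` only the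
terms with `s = j` (resp. `t = j`) survive, and there the index sequence is `1, …, n` again.
-/

open Equiv

noncomputable def appendₗ (m : ℕ) : ⨂[k]^m V →ₗ[k] V →ₗ[k] ⨂[k]^(m+1) V :=
  ((TensorProduct.mk k _ _).compr₂ (mulPow k V m 1).toLinearMap).compl₂ toPow1.toLinearMap

lemma appendₗ_apply {m : ℕ} (w : ⨂[k]^m V) (v : V) : appendₗ m w v = append w v := rfl

noncomputable def prependₗ (m : ℕ) : V →ₗ[k] ⨂[k]^m V →ₗ[k] ⨂[k]^(m+1) V :=
  ((TensorProduct.mk k _ _).compr₂ ((TensorPower.cast k V (Nat.add_comm 1 m)).toLinearMap ∘ₗ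
    (mulPow k V 1 m).toLinearMap)).comp toPow1.toLinearMap

lemma prependₗ_apply {m : ℕ} (v : V) (w : ⨂[k]^m V) : prependₗ m v w = prepend v w := rfl

lemma toPow1_apply (v : V) : (toPow1 v : ⨂[k]^1 V) = tprod k (fun _ => v) := by
  rw [toPow1, LinearEquiv.symm_apply_eq, subsingletonEquiv_apply_tprod]

lemma append_tprod {m : ℕ} (f : Fin m → V) (v : V) :
    append (tprod k f) v = tprod k (Fin.snoc f v : Fin (m+1) → V) := by
  rw [append, toPow1_apply, ← TensorPower.gMul_def, TensorPower.tprod_mul_tprod,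
    Fin.append_right_eq_snoc]

variable (k V) in
noncomputable def altTprod (m : ℕ) : V [⋀^Fin m]→ₗ[k] ⨂[k]^m V :=
  MultilinearMap.alternatization (tprod k)

lemma altTprod_apply {m : ℕ} (v : Fin m → V) :
    altTprod k V m v =
      ∑ σ : Perm (Fin m), ((Perm.sign σ : ℤ) : k) • tprod k (v ∘ σ) := by
  simp only [altTprod, MultilinearMap.alternatization_apply, Units.smul_def,
    Int.cast_smul_eq_zsmul]
  rfl

noncomputable def permInsertLast {m : ℕ} (j : Fin (m+1)) (σ : Perm (Fin m)) : Perm (Fin (m+1)) :=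
  Fin.cycleIcc j (Fin.last m) * σ.viaFintypeEmbedding Fin.castSuccEmb

lemma permInsertLast_last {m : ℕ} (j : Fin (m+1)) (σ : Perm (Fin m)) :
    permInsertLast j σ (Fin.last m) = j := by
  rw [permInsertLast, Perm.mul_apply, Perm.viaFintypeEmbedding_apply_notMem_range,
    Fin.cycleIcc_of_last (Fin.le_last j)]
  simp

lemma permInsertLast_castSucc {m : ℕ} (j : Fin (m+1)) (σ : Perm (Fin m)) (i : Fin m) :
    permInsertLast j σ (Fin.castSucc i) = j.succAbove (σ i) := by
  rw [permInsertLast, Perm.mul_apply, ← Fin.coe_castSuccEmb,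
    Perm.viaFintypeEmbedding_apply_image, ← Fin.cycleIcc_comp_succAbove j _ (Fin.le_last j),
    Fin.coe_castSuccEmb, Fin.succAbove_last]
  rfl

lemma sign_permInsertLast {m : ℕ} (j : Fin (m+1)) (σ : Perm (Fin m)) :
    Perm.sign (permInsertLast j σ) = (-1) ^ (m - j : ℕ) * Perm.sign σ := by
  rw [permInsertLast, Perm.sign_mul, Fin.sign_cycleIcc_of_le (Fin.le_last j),
    Perm.viaFintypeEmbedding_sign, Fin.val_last]

lemma bijective_permInsertLast (m : ℕ) :
    Function.Bijective (fun p : Fin (m+1) × Perm (Fin m) => permInsertLast p.1 p.2) := by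
  refine (Fintype.bijective_iff_injective_and_card _).mpr
    ⟨?_, by simp [Fintype.card_perm, Nat.factorial_succ]⟩
  rintro ⟨j, σ⟩ ⟨j', σ'⟩ h
  have hj : j = j' := by simpa only [permInsertLast_last] using congrArg (· (Fin.last m)) h
  subst hj
  refine Prod.ext rfl (Perm.ext fun i => Fin.succAbove_right_injective (p := j) ?_)
  simpa only [permInsertLast_castSucc] using congrArg (· (Fin.castSucc i)) h

lemma altTprod_succ {m : ℕ} (v : Fin (m+1) → V) :
    altTprod k V (m+1) v
      = ∑ j : Fin (m+1),
          (-1 : k) ^ (m - j : ℕ) • append (altTprod k V m (v ∘ j.succAbove)) (v j) := by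
  rw [altTprod_apply, ← (bijective_permInsertLast m).sum_comp
    (fun e => ((Perm.sign e : ℤ) : k) • tprod k (v ∘ e)), Fintype.sum_prod_type]
  refine Finset.sum_congr rfl fun j _ => ?_
  rw [altTprod_apply, ← appendₗ_apply, map_sum, LinearMap.sum_apply, Finset.smul_sum]
  refine Finset.sum_congr rfl fun σ _ => ?_
  have hv : v ∘ permInsertLast j σ = Fin.snoc (v ∘ j.succAbove ∘ σ) (v j) := by
    funext i
    induction i using Fin.lastCases with
    | last => simp [permInsertLast_last]
    | cast i => simp [permInsertLast_castSucc]
  rw [hv, map_smul, LinearMap.smul_apply, appendₗ_apply, append_tprod, smul_smul,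
    sign_permInsertLast]
  push_cast
  rfl

lemma rElt_succ_eq_altTprod {n : ℕ} (x : Fin n → V) :
    ∀ (m : ℕ) (ι : Fin (m+1) → Fin n),
      rElt (k := k) x (m+1) ι = altTprod k V (m+1) (x ∘ ι)
  | 0, ι => by
    rw [rElt, altTprod_apply, Fintype.sum_unique (ι := Perm (Fin 1)), toPow1_apply]
    simp only [default, Perm.sign_refl, Units.val_one, Int.cast_one, one_smul]
    congr 1
    funext i
    rw [Subsingleton.elim i 0]
    rfl
  | 1, ι => by
    rw [altTprod_succ, Fin.sum_univ_two, Function.comp_assoc, Function.comp_assoc,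
      ← rElt_succ_eq_altTprod x 0, ← rElt_succ_eq_altTprod x 0]
    simp [rElt, sub_eq_neg_add]
  | m+2, ι => by
    rw [rElt, altTprod_succ]
    refine Finset.sum_congr rfl fun j _ => ?_
    rw [rElt_succ_eq_altTprod x (m+1)]
    rfl

lemma rElt_eq_zero_of_apply_eq {n m : ℕ} (x : Fin n → V) {ι : Fin m → Fin n} {p q : Fin m}
    (h : ι p = ι q) (hpq : p ≠ q) : rElt (k := k) x m ι = 0 := by
  cases m with
  | zero => exact p.elim0
  | succ m =>
    rw [rElt_succ_eq_altTprod]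
    exact (altTprod k V _).map_eq_zero_of_eq _ (congrArg x h) hpq

lemma sum_apply_rElt_update {M : Type*} [AddCommMonoid M] {n : ℕ} (x : Fin n → V) (j : Fin n)
    (f : Fin n → ⨂[k]^n V → M) (hf : ∀ s, f s 0 = 0) :
    ∑ s, f s (rElt x n (Function.update (fun p => p) j s)) = f j (rElt x n (fun p => p)) := by
  rw [Fintype.sum_eq_single j fun s hs => ?_, Function.update_eq_self]
  rw [rElt_eq_zero_of_apply_eq x (p := j) (q := s) (by simp [hs]) (Ne.symm hs), hf]

theorem thm_4_1_key_general {n : ℕ} (b : Module.Basis (Fin n) k V)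
    (K : Fin n → Fin n → Fin n → k) :
    (∑ j : Fin n, ∑ s : Fin n, ∑ t : Fin n,
        K j s t •
          (append (rElt (k := k) (fun i => b i) n (Function.update (fun p : Fin n => p) j s))
            (b t) : ⨂[k]^(n+1) V)
      = append (rElt (k := k) (fun i => b i) n (fun p : Fin n => p))
          (∑ s : Fin n, ∑ t : Fin n, K s s t • b t))
    ∧ (∑ j : Fin n, ∑ s : Fin n, ∑ t : Fin n,
        K j s t •
          (prepend (b s)
              (rElt (k := k) (fun i => b i) n (Function.update (fun p : Fin n => p) j t))
            : ⨂[k]^(n+1) V)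
      = prepend (∑ s : Fin n, ∑ t : Fin n, K t s t • b s)
          (rElt (k := k) (fun i => b i) n (fun p : Fin n => p)))
    ∧ ((∑ s : Fin n, ∑ t : Fin n, K s s t • b t)
        + (∑ s : Fin n, ∑ t : Fin n, K t s t • b s)
      = ∑ s : Fin n, ∑ t : Fin n, (K s s t + K s t s) • (b t : V)) := by
  refine ⟨?_, ?_, ?_⟩
  · calc _ = ∑ j, ∑ t, K j j t • append (rElt (fun i => b i) n (fun p => p)) (b t) :=
          Finset.sum_congr rfl fun j _ => sum_apply_rElt_update _ j
            (fun s w => ∑ t, K j s t • append w (b t))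
            (by simp [← appendₗ_apply])
      _ = _ := by simp only [← appendₗ_apply, map_sum, map_smul]
  · calc _ = ∑ j, ∑ s, K j s j • prepend (b s) (rElt (fun i => b i) n (fun p => p)) :=
          Finset.sum_congr rfl fun j _ => Finset.sum_congr rfl fun s _ =>
            sum_apply_rElt_update _ j (fun t w => K j s t • prepend (b s) w)
              (by simp [← prependₗ_apply])
      _ = _ := by
        rw [Finset.sum_comm]
        simp only [← prependₗ_apply, map_sum, map_smul, LinearMap.sum_apply,
          LinearMap.smul_apply]
  · simp only [add_smul, Finset.sum_add_distrib]
    rw [Finset.sum_comm (f := fun s t => K t s t • b s)]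

/-- The key computation in the proof of **Theorem 4.1**: for scalars `k^{(i)}_{st}`,
`∑_{j,s,t} k^{(j)}_{st} r_{1,…,j−1,s,j+1,…,n} ⊗ x_t = r_{1⋯n} ⊗ (∑_{s,t} k^{(s)}_{st} x_t)`,
`∑_{j,s,t} k^{(j)}_{st} x_s ⊗ r_{1,…,j−1,t,j+1,…,n} = (∑_{s,t} k^{(t)}_{st} x_s) ⊗ r_{1⋯n}`,
and the two right-hand side vectors sum to the divergence
`∑_{s,t} (k^{(s)}_{st} + k^{(s)}_{ts}) x_t`. -/
theorem thm_4_1_key {n : ℕ} (hn : 2 ≤ n) (b : Module.Basis (Fin n) k V)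
    (K : Fin n → Fin n → Fin n → k) :
    (∑ j : Fin n, ∑ s : Fin n, ∑ t : Fin n,
        K j s t •
          (append (rElt (k := k) (fun i => b i) n (Function.update (fun p : Fin n => p) j s))
            (b t) : ⨂[k]^(n+1) V)
      = append (rElt (k := k) (fun i => b i) n (fun p : Fin n => p))
          (∑ s : Fin n, ∑ t : Fin n, K s s t • b t))
    ∧ (∑ j : Fin n, ∑ s : Fin n, ∑ t : Fin n,
        K j s t •
          (prepend (b s)
              (rElt (k := k) (fun i => b i) n (Function.update (fun p : Fin n => p) j t))
            : ⨂[k]^(n+1) V)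
      = prepend (∑ s : Fin n, ∑ t : Fin n, K t s t • b s)
          (rElt (k := k) (fun i => b i) n (fun p : Fin n => p)))
    ∧ ((∑ s : Fin n, ∑ t : Fin n, K s s t • b t)
        + (∑ s : Fin n, ∑ t : Fin n, K t s t • b s)
      = ∑ s : Fin n, ∑ t : Fin n, (K s s t + K s t s) • (b t : V)) :=
  thm_4_1_key_general b K

end OrePaper
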